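/- arXiv:2109.03620 — 5 statements merged into one kernel-verified Lean document; each statement's English description precedes it below -/
import Mathlib

section
/- Let A be an n×n matrix over a totally ordered commutative group. If ℓ is a canon for A, define μ_i := (max_k ℓ_k) − ℓ_i and ν_j := max_k (a_{k,j} − μ_k). Then (μ, ν) is a minimal cover for A. -/
/-
An assignment `σ` of rows to columns gives the weak-duality bound `∑ᵢ aᵢ,σ(i) ≤ ∑ᵢ (μᵢ + νᵢ)` for
every cover, so a cover attaining equality along some `σ` is minimal. For any `μ`, setting
`ν_j := max_k (a_{k,j} − μ_k)` gives a cover. When `μ_i = max ℓ − ℓ_i`, we have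
`a_{k,j} − μ_k = (A + ℓ)_{k,j} − max ℓ`, so the transversal column-maxima `σ` of `A + ℓ` say that
the maximum defining `ν_{σ(i)}` is attained at `k = i`: the cover is tight along `σ`.
-/

/-- The maximum of a function on `Fin n`, `n ≠ 0`. -/
def maxF {n : ℕ} [NeZero n] {M : Type*} [LinearOrder M] (f : Fin n → M) : M :=
  Finset.univ.sup' ⟨⟨0, Nat.pos_of_ne_zero (NeZero.ne n)⟩, Finset.mem_univ _⟩ f

/-- `ℓ` is a canon for the `n × n` matrix `A`: `ℓ` is nonnegative and `A + ℓ`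
possesses `n` transversal column-maxima. -/
def IsCanon {n : ℕ} {M : Type*} [AddCommGroup M] [LinearOrder M] [IsOrderedAddMonoid M]
    (A : Fin n → Fin n → M) (ℓ : Fin n → M) : Prop :=
  (∀ i, 0 ≤ ℓ i) ∧
    ∃ σ : Equiv.Perm (Fin n), ∀ i i', A i' (σ i) + ℓ i' ≤ A i (σ i) + ℓ i

/-- `(μ, ν)` is a cover of `A`. -/
def IsCover {n : ℕ} {M : Type*} [AddCommGroup M] [LinearOrder M] [IsOrderedAddMonoid M]
    (A : Fin n → Fin n → M) (μ ν : Fin n → M) : Prop :=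
  ∀ i j, A i j ≤ μ i + ν j

/-- A minimal cover minimizes `∑ i, (μ i + ν i)`. -/
def IsMinimalCover {n : ℕ} {M : Type*} [AddCommGroup M] [LinearOrder M] [IsOrderedAddMonoid M]
    (A : Fin n → Fin n → M) (μ ν : Fin n → M) : Prop :=
  IsCover A μ ν ∧
    ∀ μ' ν', IsCover A μ' ν' → ∑ i, (μ i + ν i) ≤ ∑ i, (μ' i + ν' i)

section MaxF

variable {n : ℕ} [NeZero n] {M : Type*} [LinearOrder M]

theorem le_maxF (f : Fin n → M) (i : Fin n) : f i ≤ maxF f :=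
  Finset.le_sup' f (Finset.mem_univ i)

theorem maxF_eq_of_forall_le {f : Fin n → M} (i : Fin n) (h : ∀ k, f k ≤ f i) : maxF f = f i :=
  le_antisymm (Finset.sup'_le _ _ fun k _ => h k) (le_maxF f i)

end MaxF

theorem sum_add_comp_perm {ι M : Type*} [Fintype ι] [AddCommMonoid M] (μ ν : ι → M)
    (σ : Equiv.Perm ι) : ∑ i, (μ i + ν (σ i)) = ∑ i, (μ i + ν i) := by
  rw [Finset.sum_add_distrib, Finset.sum_add_distrib, Equiv.sum_comp σ ν]

section Cover

variable {n : ℕ} {M : Type*} [AddCommGroup M] [LinearOrder M] [IsOrderedAddMonoid M]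

theorem isCover_maxF_sub [NeZero n] (A : Fin n → Fin n → M) (μ : Fin n → M) :
    IsCover A μ (fun j => maxF fun k => A k j - μ k) :=
  fun i j => sub_le_iff_le_add'.mp (le_maxF (fun k => A k j - μ k) i)

variable {A : Fin n → Fin n → M} {μ ν : Fin n → M}

theorem IsCover.sum_perm_le (hc : IsCover A μ ν) (σ : Equiv.Perm (Fin n)) :
    ∑ i, A i (σ i) ≤ ∑ i, (μ i + ν i) :=
  calc ∑ i, A i (σ i)
      ≤ ∑ i, (μ i + ν (σ i)) := Finset.sum_le_sum fun i _ => hc i (σ i)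
    _ = ∑ i, (μ i + ν i) := sum_add_comp_perm μ ν σ

theorem IsCover.isMinimalCover_of_tight (hc : IsCover A μ ν) (σ : Equiv.Perm (Fin n))
    (htight : ∀ i, μ i + ν (σ i) = A i (σ i)) : IsMinimalCover A μ ν := by
  refine ⟨hc, fun μ' ν' hc' => ?_⟩
  calc ∑ i, (μ i + ν i)
      = ∑ i, (μ i + ν (σ i)) := (sum_add_comp_perm μ ν σ).symm
    _ = ∑ i, A i (σ i) := Finset.sum_congr rfl fun i _ => htight i
    _ ≤ ∑ i, (μ' i + ν' i) := hc'.sum_perm_le σ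

end Cover

/-- The cover associated to a canon `ℓ`, namely
`μ_i := (max_k ℓ_k) − ℓ_i` and `ν_j := max_k (a_{k,j} − μ_k)`,
is a minimal cover for `A`. -/
theorem cover_of_canon_isMinimal {n : ℕ} [NeZero n] {M : Type*}
    [AddCommGroup M] [LinearOrder M] [IsOrderedAddMonoid M] (A : Fin n → Fin n → M) (ℓ : Fin n → M)
    (h : IsCanon A ℓ) :
    IsMinimalCover A (fun i => maxF ℓ - ℓ i)
      (fun j => maxF fun k => A k j - (maxF ℓ - ℓ k)) := by
  obtain ⟨-, σ, hσ⟩ := h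
  refine (isCover_maxF_sub A _).isMinimalCover_of_tight σ fun i => ?_
  have hmax : ∀ k, A k (σ i) - (maxF ℓ - ℓ k) ≤ A i (σ i) - (maxF ℓ - ℓ i) := fun k => by
    simpa only [sub_sub_eq_add_sub] using sub_le_sub_right (hσ i k) (maxF ℓ)
  simp only [maxF_eq_of_forall_le i hmax, add_sub_cancel]
end

section
/- Let A be an n×n matrix over a totally ordered commutative group and let (μ, ν) be a minimal cover for A. Define ℓ_i := (max_k μ_k) − μ_i. Then ℓ is a canon for A. -/
open Finset

theorem Finset.exists_pos_forall_add_le {α M : Type*} [AddCommGroup M] [LinearOrder M]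
    [IsOrderedAddMonoid M] {S : Finset α} (hS : S.Nonempty) {f g : α → M}
    (hfg : ∀ a ∈ S, f a < g a) : ∃ ε > 0, ∀ a ∈ S, f a + ε ≤ g a := by
  refine ⟨S.inf' hS (fun a => g a - f a), (lt_inf'_iff hS).2 fun a ha => sub_pos.2 (hfg a ha),
    fun a ha => ?_⟩
  exact le_sub_iff_add_le'.1 (inf'_le (fun a => g a - f a) ha)

theorem Finset.sum_sub_ite_add_add_ite {ι M : Type*} [Fintype ι] [DecidableEq ι] [AddCommGroup M]
    (μ ν : ι → M) (s T : Finset ι) (ε : M) :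
    ∑ i, ((μ i - if i ∈ s then ε else 0) + (ν i + if i ∈ T then ε else 0)) =
      ∑ i, (μ i + ν i) + #T • ε - #s • ε := by
  simp only [sum_add_distrib, sum_sub_distrib, sum_ite_mem, univ_inter, sum_const]
  abel

section Cover

variable {n : ℕ} {M : Type*} [AddCommGroup M] [LinearOrder M] [IsOrderedAddMonoid M]
  {A : Fin n → Fin n → M} {μ ν : Fin n → M}

def tightCols (A : Fin n → Fin n → M) (μ ν : Fin n → M) (i : Fin n) : Finset (Fin n) :=
  univ.filter fun j => A i j = μ i + ν j

theorem IsCover.shift {s T : Finset (Fin n)} {ε : M} (hcov : IsCover A μ ν) (hε : 0 ≤ ε)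
    (hslack : ∀ i ∈ s, ∀ j ∉ T, A i j + ε ≤ μ i + ν j) :
    IsCover A (fun i => μ i - if i ∈ s then ε else 0) (fun j => ν j + if j ∈ T then ε else 0) := by
  intro i j
  by_cases hi : i ∈ s <;> by_cases hj : j ∈ T <;> simp only [hi, hj, if_true, if_false]
  · calc A i j ≤ μ i + ν j := hcov i j
      _ = μ i - ε + (ν j + ε) := by abel
  · calc A i j ≤ μ i + ν j - ε := le_sub_iff_add_le.2 (hslack i hi j hj)
      _ = μ i - ε + (ν j + 0) := by abel
  · calc A i j ≤ μ i + ν j := hcov i j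
      _ ≤ μ i - 0 + (ν j + ε) := by simpa [add_assoc] using hε
  · simpa using hcov i j

theorem IsMinimalCover.card_le_card_biUnion_tightCols (hmin : IsMinimalCover A μ ν)
    (s : Finset (Fin n)) : #s ≤ #(s.biUnion (tightCols A μ ν)) := by
  by_contra! hs
  set T := s.biUnion (tightCols A μ ν)
  have hTc : Tᶜ.Nonempty := by
    rw [← card_pos, card_compl, Fintype.card_fin]
    have := s.card_le_univ
    simp only [Fintype.card_fin] at this
    omega
  have hpairs : (s ×ˢ Tᶜ).Nonempty := (card_pos.1 (by omega)).product hTc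
  have hstrict : ∀ p ∈ s ×ˢ Tᶜ, A p.1 p.2 < μ p.1 + ν p.2 := by
    rintro ⟨i, j⟩ hij
    rw [mem_product, mem_compl] at hij
    refine (hmin.1 i j).lt_of_ne fun htight => hij.2 (mem_biUnion.2 ⟨i, hij.1, ?_⟩)
    simpa [tightCols] using htight
  obtain ⟨ε, hε, hslack⟩ := exists_pos_forall_add_le hpairs hstrict
  have hle := hmin.2 _ _ <| hmin.1.shift hε.le fun i hi j hj =>
    hslack (i, j) (mem_product.2 ⟨hi, mem_compl.2 hj⟩)
  rw [sum_sub_ite_add_add_ite, le_sub_iff_add_le, add_le_add_iff_left] at hle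
  exact (nsmul_lt_nsmul_left hε hs).not_ge hle

theorem IsMinimalCover.exists_perm_tight (hmin : IsMinimalCover A μ ν) :
    ∃ σ : Equiv.Perm (Fin n), ∀ i, A i (σ i) = μ i + ν (σ i) := by
  obtain ⟨f, hf, hft⟩ :=
    (all_card_le_biUnion_card_iff_exists_injective _).1 hmin.card_le_card_biUnion_tightCols
  exact ⟨.ofBijective f (Finite.injective_iff_bijective.1 hf), fun i => (mem_filter.1 (hft i)).2⟩

theorem IsCover.isCanon_sub (hcov : IsCover A μ ν) {σ : Equiv.Perm (Fin n)}
    (hσ : ∀ i, A i (σ i) = μ i + ν (σ i)) {c : M} (hc : ∀ i, μ i ≤ c) :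
    IsCanon A (fun i => c - μ i) := by
  refine ⟨fun i => sub_nonneg.2 (hc i), σ, fun i i' => ?_⟩
  calc A i' (σ i) + (c - μ i') ≤ μ i' + ν (σ i) + (c - μ i') := add_le_add_left (hcov i' (σ i)) _
    _ = A i (σ i) + (c - μ i) := by rw [hσ]; abel

end Cover

/-- The canon associated to a minimal cover `(μ, ν)`, namely
`ℓ_i := (max_k μ_k) − μ_i`, is a canon for `A`. -/
theorem canon_of_minimalCover {n : ℕ} [NeZero n] {M : Type*}
    [AddCommGroup M] [LinearOrder M] [IsOrderedAddMonoid M] (A : Fin n → Fin n → M) (μ ν : Fin n → M)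
    (hmin : IsMinimalCover A μ ν) :
    IsCanon A (fun i => maxF μ - μ i) := by
  obtain ⟨σ, hσ⟩ := hmin.exists_perm_tight
  exact hmin.1.isCanon_sub hσ fun i => le_sup' μ (mem_univ i)
end

section
/- Let A be an n×n matrix of nonnegative integers whose diagonal forms a maximal transversal sum, i.e. 𝒪_A = Σ_{i=1}^n a_{i,i}, and let λ be the minimal canon of A. Then max_i λ_i ≤ (n−1)·max_{i,j} a_{i,j}. -/
/-- The tropical determinant of an `n × n` matrix of natural numbers. -/
noncomputable def tropDet {n : ℕ} (A : Fin n → Fin n → ℕ) : ℕ :=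
  Finset.univ.sup fun σ : Equiv.Perm (Fin n) => ∑ i, A i (σ i)

/-- `ℓ` is a canon for `A` with respect to the diagonal transversal family. -/
def DiagCanon {n : ℕ} (A : Fin n → Fin n → ℕ) (ℓ : Fin n → ℕ) : Prop :=
  ∀ i i', A i' i + ℓ i' ≤ A i i + ℓ i

/-- If the diagonal of a nonnegative integer matrix forms a maximal transversal
sum, then the minimal canon `λ` satisfies `max_i λ_i ≤ (n−1) · max_{i,j} a_{i,j}`. -/
theorem minimal_canon_bound {n : ℕ} (A : Fin n → Fin n → ℕ) (lam : Fin n → ℕ)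
    (hdiag : ∑ i, A i i = tropDet A)
    (hc : DiagCanon A lam) (hmin : ∀ m, DiagCanon A m → lam ≤ m) :
    ∀ i, lam i ≤ (n - 1) * Finset.univ.sup fun i => Finset.univ.sup fun j => A i j := by
  set M := (Finset.univ.sup fun i => Finset.univ.sup fun j => A i j) with hM
  have hA : ∀ i j, A i j ≤ M := fun i j =>
    le_trans (Finset.le_sup (f := fun j => A i j) (Finset.mem_univ j))
      (Finset.le_sup (f := fun i => Finset.univ.sup fun j => A i j) (Finset.mem_univ i))
  -- key step: any attained positive level t has an element ≥ t within M of an element < t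
  have key : ∀ t : ℕ, 0 < t → ∀ i0, t ≤ lam i0 →
      ∃ i i', t ≤ lam i ∧ lam i' < t ∧ lam i ≤ lam i' + M := by
    intro t ht i0 hi0
    by_contra hno
    push_neg at hno
    have hcanon : DiagCanon A (fun j => if t ≤ lam j then lam j - 1 else lam j) := by
      intro i i'
      have h1 := hc i i'
      have h2 := hA i' i
      have h5 := hno i i'
      dsimp only
      split_ifs <;> omega
    have hle := hmin _ hcanon i0
    simp only [hi0, if_pos] at hle
    omega
  -- main induction
  have main : ∀ v : ℕ, ∀ i, lam i ≤ v →
      lam i ≤ (Finset.univ.filter (fun j => lam j < lam i)).card * M := by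
    intro v
    induction v with
    | zero => intro i h; exact le_trans h (Nat.zero_le _)
    | succ v ih =>
      intro i h
      rcases Nat.lt_or_ge 0 (lam i) with hpos | h0
      · obtain ⟨j, i', hj, hi', hle⟩ := key (lam i) hpos i le_rfl
        have hIH := ih i' (by omega)
        have hsub : (Finset.univ.filter (fun k => lam k < lam i')).card + 1 ≤
            (Finset.univ.filter (fun k => lam k < lam i)).card := by
          have hins : insert i' (Finset.univ.filter (fun k => lam k < lam i')) ⊆
              Finset.univ.filter (fun k => lam k < lam i) := by
            intro k hk
            simp only [Finset.mem_insert, Finset.mem_filter, Finset.mem_univ, true_and] at *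
            rcases hk with rfl | hk
            · omega
            · omega
          have hni : i' ∉ Finset.univ.filter (fun k => lam k < lam i') := by simp
          calc (Finset.univ.filter (fun k => lam k < lam i')).card + 1
              = (insert i' (Finset.univ.filter (fun k => lam k < lam i'))).card := by
                rw [Finset.card_insert_of_notMem hni]
            _ ≤ _ := Finset.card_le_card hins
        calc lam i ≤ lam i' + M := by omega
          _ ≤ (Finset.univ.filter (fun k => lam k < lam i')).card * M + M := by omega
          _ = ((Finset.univ.filter (fun k => lam k < lam i')).card + 1) * M := by ring
          _ ≤ _ := Nat.mul_le_mul_right _ hsub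
      · exact le_trans h0 (Nat.zero_le _)
  intro i
  have hbound := main (lam i) i le_rfl
  have hcard : (Finset.univ.filter (fun j => lam j < lam i)).card ≤ n - 1 := by
    have hsub : Finset.univ.filter (fun j => lam j < lam i) ⊆ Finset.univ.erase i := by
      intro k hk
      simp only [Finset.mem_filter, Finset.mem_univ, true_and] at hk
      simp only [Finset.mem_erase, Finset.mem_univ, and_true]
      rintro rfl
      omega
    calc (Finset.univ.filter (fun j => lam j < lam i)).card
        ≤ (Finset.univ.erase i).card := Finset.card_le_card hsub
      _ = n - 1 := by
          rw [Finset.card_erase_of_mem (Finset.mem_univ i), Finset.card_univ, Fintype.card_fin]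
  exact le_trans hbound (Nat.mul_le_mul_right _ hcard)
end

section
/- Let A be an n×n matrix over a totally ordered commutative group and c ∈ M^n a vector of nonnegative entries. Then there exists a unique minimal canon of A subject to the constraints ℓ_i ≥ c_i for all i, and it equals λ' + c where λ' is the minimal canon of the matrix A + c. -/
/-! Adding `c` to the rows of `A` and adding `c` to a canon produce the same matrix
`a_{i,j} + c_i + ℓ_i`, so the canons of `A` above `c` are exactly the translates by `c`
of the canons of `A + c`. -/

section

variable {n : ℕ} {M : Type*} [AddCommGroup M] [LinearOrder M] [IsOrderedAddMonoid M]

theorem isCanon_add_row_iff {A : Fin n → Fin n → M} {c ℓ : Fin n → M}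
    (hℓ : ∀ i, 0 ≤ ℓ i) (hc : ∀ i, 0 ≤ c i) :
    IsCanon (fun i j => A i j + c i) ℓ ↔ IsCanon A (fun i => ℓ i + c i) := by
  simp only [IsCanon, hℓ, fun i => add_nonneg (hℓ i) (hc i), implies_true, true_and,
    add_assoc, add_comm (c _)]

theorem isCanon_sub_of_le {A : Fin n → Fin n → M} {c ℓ : Fin n → M}
    (hℓ : IsCanon A ℓ) (hcℓ : ∀ i, c i ≤ ℓ i) (hc : ∀ i, 0 ≤ c i) :
    IsCanon (fun i j => A i j + c i) (fun i => ℓ i - c i) :=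
  (isCanon_add_row_iff (fun i => sub_nonneg.2 (hcℓ i)) hc).2 (by simpa only [sub_add_cancel])

end

/-- Minimal canon subject to lower bounds: if `λ'` is the minimal canon of the
matrix `A + c` (entries `a_{i,j} + c_i`), where `c` is nonnegative, then
`λ' + c` is the least canon of `A` subject to `ℓ ≥ c`; in particular a unique
minimal such canon exists and equals `λ' + c`. -/
theorem minimal_canon_subject_to_bounds {n : ℕ} {M : Type*}
    [AddCommGroup M] [LinearOrder M] [IsOrderedAddMonoid M] (A : Fin n → Fin n → M)
    (c : Fin n → M) (hc : ∀ i, 0 ≤ c i) (lam' : Fin n → M)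
    (h1 : IsCanon (fun i j => A i j + c i) lam')
    (h2 : ∀ m, IsCanon (fun i j => A i j + c i) m → lam' ≤ m) :
    IsLeast {ℓ | IsCanon A ℓ ∧ ∀ i, c i ≤ ℓ i} (fun i => lam' i + c i) ∧
      ∀ m ∈ {ℓ | IsCanon A ℓ ∧ ∀ i, c i ≤ ℓ i},
        (∀ m' ∈ {ℓ | IsCanon A ℓ ∧ ∀ i, c i ≤ ℓ i}, m' ≤ m → m' = m) →
          m = fun i => lam' i + c i := by
  have hleast : IsLeast {ℓ | IsCanon A ℓ ∧ ∀ i, c i ≤ ℓ i} (fun i => lam' i + c i) := by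
    refine ⟨⟨(isCanon_add_row_iff h1.1 hc).1 h1, fun i => le_add_of_nonneg_left (h1.1 i)⟩, ?_⟩
    rintro ℓ ⟨hℓ, hcℓ⟩ i
    exact le_sub_iff_add_le.1 (h2 _ (isCanon_sub_of_le hℓ hcℓ hc) i)
  refine ⟨hleast, fun m hm hmin => hleast.minimal_iff.1 ⟨hm, fun m' hm' hle => ?_⟩⟩
  exact (hmin m' hm' hle).ge
end

section
/- (Tropical identity for resolvent orders) Let A be an n×n matrix (over ℤ ∪ {−∞}) whose diagonal entries form a maximal transversal sum. For j ≠ n let A_{[j]} denote the matrix obtained from A by replacing column n with column j, and let 𝒪̄_{i,n} denote the tropical determinant of A with row i and column n deleted. Then Σ_{i=1}^n 𝒪̄_{i,n} = Σ_{j=1}^{n−1} |A_{[j]}|_T, where |·|_T is the tropical determinant; equivalently Σ_{i=1}^n 𝒪̄_{i,n} = Σ_{j≠n} max_{i=1}^n (𝒪̄_{i,n} + a_{i,j}). -/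
open Finset

/-- Tropical determinant of the submatrix of `A` with rows in `I` and columns
in `J`: the maximum over bijections `e : I ≃ J` of `∑_{i ∈ I} A i (e i)`. -/
noncomputable def tdetSub {m : ℕ} (A : Fin m → Fin m → WithBot ℤ)
    (I J : Finset (Fin m)) : WithBot ℤ :=
  (Finset.univ : Finset (↥I ≃ ↥J)).sup fun e => ∑ i : ↥I, A i (e i)

/-- The full tropical determinant: max over permutations of the transversal sums. -/
noncomputable def tdetFull {m : ℕ} (A : Fin m → Fin m → WithBot ℤ) : WithBot ℤ :=
  Finset.univ.sup fun σ : Equiv.Perm (Fin m) => ∑ i, A i (σ i)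

/-!
Both sides are sums of entries of `A` over multisets of positions: on the left one transversal
avoiding row `i` and column `L` for each `i`, on the right one transversal of `A_{[j]}` for each
`j ≠ L`, which read in `A` uses column `j` twice. Recording a family by the matrix `X` counting
how often each position is used (and padding column `L` with ones), both kinds of families produce
exactly the `ℕ`-matrices with all line sums `n + 1` and column `L` equal to one. Conversely every
such `X` comes from a family of either kind: by the integer Birkhoff–von Neumann theorem `X`, or
`X` with one entry per column `j ≠ L` moved to column `L`, is a sum of permutation matrices, and
these can be indexed so that the one indexed by `i` (resp. `j`) has its `L`-entry in the right
row. Hence both sides are the maximum of `∑ X r c • a r c` over the same set of matrices `X`.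
-/

theorem Equiv.exists_comp_eq_of_card_fiber_eq {α β γ : Type*} [Fintype α] [Fintype β]
    [DecidableEq γ] (f : α → γ) (g : β → γ) (h : ∀ c, #{a | f a = c} = #{b | g b = c}) :
    ∃ e : β ≃ α, ∀ b, f (e b) = g b :=
  ⟨Equiv.ofFiberEquiv fun c => Fintype.equivOfCardEq <| by
      simpa only [Fintype.card_subtype] using (h c).symm,
    Equiv.ofFiberEquiv_map _⟩

namespace Matrix

variable {n κ M : Type*}

section

variable [Fintype n] [AddCommMonoid M]

def entrySum (A : Matrix n n M) : Matrix n n ℕ →+ M where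
  toFun X := ∑ r, ∑ c, X r c • A r c
  map_zero' := by simp
  map_add' X Y := by simp [add_smul, sum_add_distrib]

theorem entrySum_apply (A : Matrix n n M) (X : Matrix n n ℕ) :
    entrySum A X = ∑ r, ∑ c, X r c • A r c := rfl

/-- The position-count matrices shared by both sides of the resolvent identity. -/
def IsResolventPattern (L : n) (X : Matrix n n ℕ) : Prop :=
  (∀ r, ∑ c, X r c = Fintype.card n) ∧ (∀ c, ∑ r, X r c = Fintype.card n) ∧ ∀ r, X r L = 1

theorem IsResolventPattern.exists_pos_apply {L : n} {X : Matrix n n ℕ}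
    (hX : IsResolventPattern L X) (c : n) : ∃ r, 0 < X r c := by
  by_contra! h
  have := hX.2.1 c
  simp only [fun r => Nat.le_zero.1 (h r), sum_const_zero] at this
  exact (Fintype.card_pos_iff.2 ⟨L⟩).ne' this.symm

end

variable [DecidableEq n]

theorem permMatrix_nat_apply (σ : Equiv.Perm n) (r c : n) :
    σ.permMatrix ℕ r c = if σ r = c then 1 else 0 := by
  simp [PEquiv.toMatrix_apply, Equiv.toPEquiv_apply]

theorem sum_permMatrix_apply (s : Finset κ) (f : κ → Equiv.Perm n) (r c : n) :
    (∑ k ∈ s, (f k).permMatrix ℕ) r c = #{k ∈ s | f k r = c} := by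
  simp only [Matrix.sum_apply, permMatrix_nat_apply, sum_boole, Nat.cast_id]

theorem sum_single_apply (s : Finset n) (ι : n → n) (r c : n) :
    (∑ j ∈ s, single (ι j) j (1 : ℕ)) r c = if c ∈ s ∧ ι c = r then 1 else 0 := by
  simp only [Matrix.sum_apply, single_apply, and_comm (a := ι _ = r)]
  simp_rw [ite_and]
  exact sum_ite_eq' s c _

theorem sum_single_le_of_pos {X : Matrix n n ℕ} {ι : n → n} (hι : ∀ c, 0 < X (ι c) c)
    (s : Finset n) (r c : n) : (∑ j ∈ s, single (ι j) j 1) r c ≤ X r c := by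
  rw [sum_single_apply]
  split_ifs with h
  · exact h.2 ▸ hι c
  · exact Nat.zero_le _

variable [Fintype n] [AddCommMonoid M]

theorem sum_permMatrix_row (σ : Equiv.Perm n) (r : n) : ∑ c, σ.permMatrix ℕ r c = 1 := by
  simp

theorem sum_permMatrix_col (σ : Equiv.Perm n) (c : n) : ∑ r, σ.permMatrix ℕ r c = 1 := by
  simp [← Equiv.eq_symm_apply]

theorem sum_sum_permMatrix_row (s : Finset κ) (f : κ → Equiv.Perm n) (r : n) :
    ∑ c, (∑ k ∈ s, (f k).permMatrix ℕ) r c = #s := by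
  simp only [Matrix.sum_apply]
  rw [Finset.sum_comm]
  simp only [sum_permMatrix_row, sum_const, smul_eq_mul, mul_one]

theorem sum_sum_permMatrix_col (s : Finset κ) (f : κ → Equiv.Perm n) (c : n) :
    ∑ r, (∑ k ∈ s, (f k).permMatrix ℕ) r c = #s := by
  simp only [Matrix.sum_apply]
  rw [Finset.sum_comm]
  simp only [sum_permMatrix_col, sum_const, smul_eq_mul, mul_one]

theorem sum_sum_single_row (s : Finset n) (ι : n → n) (r : n) :
    ∑ c, (∑ j ∈ s, single (ι j) j (1 : ℕ)) r c = #{j ∈ s | ι j = r} := by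
  simp only [sum_single_apply, ite_and, ← sum_filter, filter_univ_mem, card_eq_sum_ones]

theorem sum_sum_single_col (s : Finset n) (ι : n → n) (c : n) :
    ∑ r, (∑ j ∈ s, single (ι j) j (1 : ℕ)) r c = if c ∈ s then 1 else 0 := by
  simp [sum_single_apply, ite_and]

theorem sum_updateCol_row_add (Y : Matrix n n M) (L : n)
    (v : n → M) (r : n) : ∑ c, updateCol Y L v r c + Y r L = ∑ c, Y r c + v r := by
  simp only [updateCol_apply]
  rw [← sum_erase_add _ _ (mem_univ L), ← sum_erase_add _ _ (mem_univ L), if_pos rfl,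
    sum_congr rfl fun c hc => if_neg (ne_of_mem_erase hc)]
  abel

theorem exists_perm_forall_pos_apply {m : ℕ} (hm : 0 < m) (X : n → n → ℕ)
    (hrow : ∀ r, ∑ c, X r c = m) (hcol : ∀ c, ∑ r, X r c = m) :
    ∃ σ : Equiv.Perm n, ∀ r, 0 < X r (σ r) := by
  have hall : ∀ s : Finset n, #s ≤ #(s.biUnion fun r => {c | 0 < X r c}) := by
    intro s
    set T := s.biUnion fun r => ({c | 0 < X r c} : Finset n)
    refine Nat.le_of_mul_le_mul_left ?_ hm
    calc m * #s = ∑ r ∈ s, ∑ c ∈ T, X r c := by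
          rw [mul_comm, ← smul_eq_mul, ← sum_const]
          refine sum_congr rfl fun r hr => ?_
          rw [← hrow r]
          refine (sum_subset (subset_univ _) fun c _ hc => ?_).symm
          by_contra h
          exact hc (mem_biUnion.2 ⟨r, hr, by simpa [Nat.pos_iff_ne_zero] using h⟩)
      _ ≤ ∑ r, ∑ c ∈ T, X r c := sum_le_sum_of_subset (subset_univ _)
      _ = m * #T := by rw [Finset.sum_comm]; simp [hcol, mul_comm]
  obtain ⟨g, hg, hgX⟩ := (all_card_le_biUnion_card_iff_exists_injective _).1 hall
  exact ⟨Equiv.ofBijective g (Finite.injective_iff_bijective.1 hg), fun r => by simpa using hgX r⟩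

/-- Integer Birkhoff–von Neumann theorem. -/
theorem exists_sum_permMatrix_eq (m : ℕ) (X : Matrix n n ℕ)
    (hrow : ∀ r, ∑ c, X r c = m) (hcol : ∀ c, ∑ r, X r c = m) :
    ∃ f : Fin m → Equiv.Perm n, ∑ t, (f t).permMatrix ℕ = X := by
  induction m generalizing X with
  | zero =>
    refine ⟨Fin.elim0, ?_⟩
    ext r c
    simpa using ((sum_eq_zero_iff.1 (hrow r)) c (mem_univ c)).symm
  | succ m ih =>
    obtain ⟨σ, hσ⟩ := exists_perm_forall_pos_apply m.succ_pos X hrow hcol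
    have hle : ∀ r c, σ.permMatrix ℕ r c ≤ X r c := fun r c => by
      rw [permMatrix_nat_apply]
      split_ifs with h
      · exact h ▸ hσ r
      · exact Nat.zero_le _
    obtain ⟨f, hf⟩ := ih (X - σ.permMatrix ℕ)
      (fun r => by
        rw [← Nat.add_sub_cancel m 1, ← hrow r, ← sum_permMatrix_row σ r,
          ← sum_tsub_distrib _ fun c _ => hle r c]
        rfl)
      (fun c => by
        rw [← Nat.add_sub_cancel m 1, ← hcol c, ← sum_permMatrix_col σ c,
          ← sum_tsub_distrib _ fun r _ => hle r c]
        rfl)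
    refine ⟨Fin.cons σ f, ?_⟩
    rw [Fin.sum_univ_succ]
    simp only [Fin.cons_zero, Fin.cons_succ, hf]
    ext r c
    exact Nat.add_sub_cancel' (hle r c)

theorem exists_sum_permMatrix_eq_of_col_eq (s : Finset κ) (ι : κ → n) (L : n)
    (X : Matrix n n ℕ) (hrow : ∀ r, ∑ c, X r c = #s) (hcol : ∀ c, ∑ r, X r c = #s)
    (hL : ∀ r, X r L = #{k ∈ s | ι k = r}) :
    ∃ g : κ → Equiv.Perm n, (∀ k ∈ s, g k (ι k) = L) ∧ ∑ k ∈ s, (g k).permMatrix ℕ = X := by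
  obtain ⟨f, hf⟩ := exists_sum_permMatrix_eq #s X hrow hcol
  -- column `L` counts the fibres of `t ↦ (f t)⁻¹ L`, so `f` can be reindexed along `ι`
  have hfib : ∀ r, #{t | (f t).symm L = r} = #{k : s | ι k = r} := fun r => by
    simp_rw [Equiv.symm_apply_eq, eq_comm (a := L)]
    rw [← sum_permMatrix_apply, hf, hL, ← attach_eq_univ, card_filter, card_filter]
    exact (sum_attach s fun k => if ι k = r then 1 else 0).symm
  obtain ⟨e, he⟩ := Equiv.exists_comp_eq_of_card_fiber_eq _ _ hfib
  classical
  refine ⟨fun k => if hk : k ∈ s then f (e ⟨k, hk⟩) else 1, fun k hk => ?_, ?_⟩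
  · simpa [hk] using ((Equiv.symm_apply_eq _).1 (he ⟨k, hk⟩)).symm
  · rw [← Finset.sum_coe_sort s, ← hf, ← e.sum_comp]
    simp

theorem entrySum_permMatrix (A : Matrix n n M) (σ : Equiv.Perm n) :
    entrySum A (σ.permMatrix ℕ) = ∑ r, A r (σ r) := by
  simp [entrySum_apply, ite_smul]

theorem entrySum_single (A : Matrix n n M) (r c : n) : entrySum A (single r c 1) = A r c := by
  simp [entrySum_apply, single_apply, ite_smul, ite_and]

theorem entrySum_updateCol_zero_updateCol (A : Matrix n n M) (L : n) (X : Matrix n n ℕ)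
    (v : n → ℕ) : entrySum (updateCol A L 0) (updateCol X L v) = entrySum (updateCol A L 0) X := by
  refine sum_congr rfl fun r _ => sum_congr rfl fun c _ => ?_
  by_cases hc : c = L
  · simp [hc]
  · rw [updateCol_ne hc]

theorem sum_compl_eq_sum_updateCol_zero (A : Matrix n n M) {σ : Equiv.Perm n} {i L : n}
    (hσ : σ i = L) : ∑ k ∈ {i}ᶜ, A k (σ k) = ∑ k, updateCol A L 0 k (σ k) := by
  rw [← sum_compl_add_sum {i}, sum_singleton, hσ, updateCol_self, Pi.zero_apply, add_zero]
  refine sum_congr rfl fun k hk => (updateCol_ne fun h => ?_).symm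
  exact (mem_compl.1 hk) (mem_singleton.2 (σ.injective (h.trans hσ.symm)))

theorem sum_replaceCol_apply (A : Matrix n n M) (L j : n) (σ : Equiv.Perm n) :
    ∑ k, (if σ k = L then A k j else A k (σ k)) =
      ∑ k, updateCol A L 0 k (σ k) + A (σ.symm L) j := by
  have hsplit : ∀ k, (if σ k = L then A k j else A k (σ k)) =
      updateCol A L 0 k (σ k) + if k = σ.symm L then A k j else 0 := fun k => by
    by_cases h : σ k = L
    · simp [h, Equiv.eq_symm_apply]
    · simp [h, Equiv.eq_symm_apply]
  simp_rw [hsplit, sum_add_distrib, sum_ite_eq']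
  simp

theorem isResolventPattern_sum_permMatrix {L : n} {ρ : n → Equiv.Perm n} (hρ : ∀ i, ρ i i = L) :
    IsResolventPattern L (∑ i, (ρ i).permMatrix ℕ) := by
  refine ⟨sum_sum_permMatrix_row _ _, sum_sum_permMatrix_col _ _, fun r => ?_⟩
  rw [sum_permMatrix_apply, card_eq_one]
  refine ⟨r, eq_singleton_iff_unique_mem.2 ⟨by simp [hρ], fun i hi => ?_⟩⟩
  exact (ρ i).injective ((mem_filter.1 hi).2.trans (hρ i).symm) ▸ rfl

theorem IsResolventPattern.exists_sum_permMatrix_eq {L : n} {X : Matrix n n ℕ}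
    (hX : IsResolventPattern L X) :
    ∃ ρ : n → Equiv.Perm n, (∀ i, ρ i i = L) ∧ ∑ i, (ρ i).permMatrix ℕ = X := by
  obtain ⟨hrow, hcol, hL⟩ := hX
  obtain ⟨ρ, hρ, hsum⟩ := exists_sum_permMatrix_eq_of_col_eq univ id L X hrow hcol
    fun r => by simp [hL, filter_eq']
  exact ⟨ρ, fun i => hρ i (mem_univ i), hsum⟩

/-- For `j ≠ L`, a transversal `g j` of `A` with column `L` replaced by column `j` picks the
entries of `A` at `(k, g j k)` for `g j k ≠ L` and at `((g j)⁻¹ L, j)`. This counts these positions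
over all `j ≠ L`; column `L`, which carries no information, is reset to ones. -/
def replaceColCount (L : n) (g : n → Equiv.Perm n) : Matrix n n ℕ :=
  updateCol (∑ j ∈ univ.erase L, ((g j).permMatrix ℕ + single ((g j).symm L) j 1)) L 1

theorem isResolventPattern_replaceColCount (L : n) (g : n → Equiv.Perm n) :
    IsResolventPattern L (replaceColCount L g) := by
  set s := univ.erase L
  have hcard : #s + 1 = Fintype.card n := card_erase_add_one (mem_univ L)
  set Y := ∑ j ∈ s, ((g j).permMatrix ℕ + single ((g j).symm L) j 1)
  have hY : Y = ∑ j ∈ s, (g j).permMatrix ℕ + ∑ j ∈ s, single ((g j).symm L) j 1 :=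
    sum_add_distrib
  change IsResolventPattern L (updateCol Y L 1)
  refine ⟨fun r => ?_, fun c => ?_, fun r => updateCol_self⟩
  · have hYrow : ∑ c, Y r c = #s + #{j ∈ s | (g j).symm L = r} := by
      simp only [hY, add_apply, sum_add_distrib, sum_sum_permMatrix_row, sum_sum_single_row]
    have hYL : Y r L = #{j ∈ s | (g j).symm L = r} := by
      rw [hY, add_apply, sum_permMatrix_apply, sum_single_apply,
        if_neg fun h => notMem_erase L univ h.1, add_zero]
      simp_rw [Equiv.symm_apply_eq, eq_comm]
    have hrow := sum_updateCol_row_add Y L 1 r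
    rw [hYrow, hYL, Pi.one_apply] at hrow
    omega
  · by_cases hc : c = L
    · simp [hc, updateCol_self]
    · simp only [updateCol_ne hc, hY, add_apply, sum_add_distrib,
        sum_sum_permMatrix_col, sum_sum_single_col]
      rwa [if_pos (mem_erase_of_ne_of_mem hc (mem_univ c))]

section

variable {L : n} {X : Matrix n n ℕ}

theorem IsResolventPattern.sum_updateCol_sub_row (hX : IsResolventPattern L X) {ι : n → n}
    (hι : ∀ c, 0 < X (ι c) c) (r : n) :
    ∑ c, updateCol (X - ∑ j ∈ univ.erase L, single (ι j) j 1) L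
      (fun r => #{j ∈ univ.erase L | ι j = r}) r c = #(univ.erase L) := by
  set s := univ.erase L
  have hcard : #s + 1 = Fintype.card n := card_erase_add_one (mem_univ L)
  have hle := sum_single_le_of_pos hι s r
  have hsub : ∑ c, (X - ∑ j ∈ s, single (ι j) j 1 : Matrix n n ℕ) r c =
      Fintype.card n - #{j ∈ s | ι j = r} := by
    rw [← hX.1 r, ← sum_sum_single_row s ι r]
    exact sum_tsub_distrib _ fun c _ => hle c
  have hfib : #{j ∈ s | ι j = r} ≤ Fintype.card n := by
    rw [← hX.1 r, ← sum_sum_single_row s ι r]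
    exact sum_le_sum fun c _ => hle c
  have hL : (X - ∑ j ∈ s, single (ι j) j 1 : Matrix n n ℕ) r L = 1 := by
    rw [sub_apply, hX.2.2 r, sum_single_apply, if_neg fun h => notMem_erase L univ h.1]
  have := sum_updateCol_row_add (X - ∑ j ∈ s, single (ι j) j 1) L
    (fun r => #{j ∈ s | ι j = r}) r
  rw [hsub, hL] at this
  omega

theorem IsResolventPattern.sum_updateCol_sub_col (hX : IsResolventPattern L X) {ι : n → n}
    (hι : ∀ c, 0 < X (ι c) c) (c : n) :
    ∑ r, updateCol (X - ∑ j ∈ univ.erase L, single (ι j) j 1) L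
      (fun r => #{j ∈ univ.erase L | ι j = r}) r c = #(univ.erase L) := by
  by_cases hc : c = L
  · simp only [hc, updateCol_self]
    exact (card_eq_sum_card_fiberwise fun j _ => mem_univ (ι j)).symm
  · simp only [updateCol_ne hc, sub_apply]
    rw [sum_tsub_distrib _ fun r _ => sum_single_le_of_pos hι _ r c, hX.2.1, sum_sum_single_col,
      if_pos (mem_erase_of_ne_of_mem hc (mem_univ c)), card_erase_of_mem (mem_univ L)]
    rfl

theorem IsResolventPattern.exists_replaceColCount_eq (hX : IsResolventPattern L X) :
    ∃ g : n → Equiv.Perm n, replaceColCount L g = X := by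
  -- moving one unit of each column `j ≠ L` from row `ι j` to column `L` leaves line sums
  -- `card n - 1`, and the permutations of a decomposition of the result then send `ι j` to `L`
  choose ι hι using hX.exists_pos_apply
  set s := univ.erase L
  obtain ⟨g, hgL, hgZ⟩ := exists_sum_permMatrix_eq_of_col_eq s ι L _
    (hX.sum_updateCol_sub_row hι) (hX.sum_updateCol_sub_col hι) fun r => updateCol_self
  refine ⟨g, ?_⟩
  have hgE : ∑ j ∈ s, single ((g j).symm L) j 1 = ∑ j ∈ s, single (ι j) j 1 :=
    sum_congr rfl fun j hj => by rw [(Equiv.symm_apply_eq _).2 (hgL j hj).symm]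
  ext r c
  rw [replaceColCount, sum_add_distrib, hgE, hgZ]
  by_cases hc : c = L
  · rw [hc, updateCol_self, hX.2.2, Pi.one_apply]
  · rw [updateCol_ne hc, add_apply, updateCol_ne hc, sub_apply,
      Nat.sub_add_cancel (sum_single_le_of_pos hι s r c)]

end

theorem entrySum_replaceColCount (A : Matrix n n M) (L : n) (g : n → Equiv.Perm n) :
    entrySum (updateCol A L 0) (replaceColCount L g) =
      ∑ j ∈ univ.erase L, ∑ k, (if g j k = L then A k j else A k (g j k)) := by
  rw [replaceColCount, entrySum_updateCol_zero_updateCol, map_sum]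
  refine sum_congr rfl fun j hj => ?_
  rw [map_add, entrySum_permMatrix, entrySum_single, updateCol_ne (ne_of_mem_erase hj),
    sum_replaceCol_apply]

end Matrix

open Matrix

theorem tdetSub_compl_singleton {m : ℕ} (A : Fin m → Fin m → WithBot ℤ) (i j : Fin m) :
    tdetSub A {i}ᶜ {j}ᶜ =
      ({σ | σ i = j} : Finset (Equiv.Perm (Fin m))).sup fun σ => ∑ k, updateCol A j 0 k (σ k) := by
  apply le_antisymm
  · refine Finset.sup_le fun e _ => ?_
    have hσ : e.extendSubtype i = j := by simpa using e.extendSubtype_not_mem i (by simp)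
    refine le_sup_of_le (b := e.extendSubtype) (by simpa using hσ) (le_of_eq ?_)
    rw [← sum_compl_eq_sum_updateCol_zero A hσ, ← sum_coe_sort ({i}ᶜ : Finset _)]
    exact sum_congr rfl fun k _ => by rw [e.extendSubtype_apply_of_mem k k.2]
  · refine Finset.sup_le fun σ hσ => ?_
    have hσ : σ i = j := (mem_filter.1 hσ).2
    have hiff : ∀ x, x ∈ ({i}ᶜ : Finset _) ↔ σ x ∈ ({j}ᶜ : Finset _) := by simp [← hσ]
    refine le_sup_of_le (mem_univ (σ.subtypeEquiv hiff)) (le_of_eq ?_)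
    rw [← sum_compl_eq_sum_updateCol_zero A hσ, ← sum_coe_sort]
    rfl

theorem tdetFull_replaceCol {m : ℕ} (A : Fin m → Fin m → WithBot ℤ) (L j : Fin m) :
    tdetFull (fun i k => if k = L then A i j else A i k) =
      univ.sup fun σ : Equiv.Perm (Fin m) => ∑ k, updateCol A L 0 k (σ k) + A (σ.symm L) j :=
  Finset.sup_congr rfl fun σ _ => sum_replaceCol_apply A L j σ

theorem tdetFull_replaceCol_eq_sup_tdetSub_add {m : ℕ} (A : Fin m → Fin m → WithBot ℤ)
    (L j : Fin m) :
    tdetFull (fun i k => if k = L then A i j else A i k) =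
      univ.sup fun i => tdetSub A {i}ᶜ {L}ᶜ + A i j := by
  simp_rw [tdetFull_replaceCol, tdetSub_compl_singleton]
  apply le_antisymm
  · refine Finset.sup_le fun σ _ => le_sup_of_le (mem_univ (σ.symm L)) (add_le_add ?_ le_rfl)
    exact le_sup (f := fun σ : Equiv.Perm (Fin m) => ∑ k, updateCol A L 0 k (σ k))
      (mem_filter.2 ⟨mem_univ σ, σ.apply_symm_apply L⟩)
  · refine Finset.sup_le fun i _ => ?_
    obtain ⟨σ, hσ, hmax⟩ := exists_mem_eq_sup ({σ | σ i = L} : Finset (Equiv.Perm (Fin m)))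
      ⟨Equiv.swap i L, by simp⟩ fun σ => ∑ k, updateCol A L 0 k (σ k)
    have hσi : σ.symm L = i := (Equiv.symm_apply_eq _).2 (mem_filter.1 hσ).2.symm
    rw [hmax, ← hσi]
    exact le_sup (f := fun σ : Equiv.Perm (Fin m) => ∑ k, updateCol A L 0 k (σ k) + A (σ.symm L) j)
      (mem_univ σ)

theorem isGreatest_sum_tdetSub {m : ℕ} (A : Fin m → Fin m → WithBot ℤ) (L : Fin m) :
    IsGreatest (entrySum (updateCol A L 0) '' {X | IsResolventPattern L X})
      (∑ i, tdetSub A {i}ᶜ {L}ᶜ) := by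
  simp_rw [tdetSub_compl_singleton]
  refine ⟨?_, ?_⟩
  · have hmax := fun i => exists_mem_eq_sup ({σ | σ i = L} : Finset (Equiv.Perm (Fin m)))
      ⟨Equiv.swap i L, by simp⟩ fun σ => ∑ k, updateCol A L 0 k (σ k)
    choose ρ hρ hρmax using hmax
    refine ⟨∑ i, (ρ i).permMatrix ℕ,
      isResolventPattern_sum_permMatrix fun i => (mem_filter.1 (hρ i)).2, ?_⟩
    simp only [map_sum, entrySum_permMatrix, hρmax]
  · rintro _ ⟨X, hX, rfl⟩
    obtain ⟨ρ, hρ, rfl⟩ := hX.exists_sum_permMatrix_eq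
    rw [map_sum]
    exact sum_le_sum fun i _ => by
      rw [entrySum_permMatrix]
      exact le_sup (f := fun σ : Equiv.Perm (Fin m) => ∑ k, updateCol A L 0 k (σ k))
        (mem_filter.2 ⟨mem_univ _, hρ i⟩)

theorem isGreatest_sum_tdetFull_replaceCol {m : ℕ} (A : Fin m → Fin m → WithBot ℤ) (L : Fin m) :
    IsGreatest (entrySum (updateCol A L 0) '' {X | IsResolventPattern L X})
      (∑ j ∈ univ.erase L, tdetFull fun i k => if k = L then A i j else A i k) := by
  refine ⟨?_, ?_⟩
  · have hmax := fun j => exists_mem_eq_sup univ univ_nonempty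
      fun σ : Equiv.Perm (Fin m) => ∑ k, (if σ k = L then A k j else A k (σ k))
    choose g _ hg using hmax
    exact ⟨replaceColCount L g, isResolventPattern_replaceColCount L g,
      (entrySum_replaceColCount A L g).trans (sum_congr rfl fun j _ => (hg j).symm)⟩
  · rintro _ ⟨X, hX, rfl⟩
    obtain ⟨g, rfl⟩ := hX.exists_replaceColCount_eq
    refine (entrySum_replaceColCount A L g).trans_le ?_
    exact sum_le_sum fun j _ => le_sup (f := fun σ : Equiv.Perm (Fin m) =>
      ∑ k, (if σ k = L then A k j else A k (σ k))) (mem_univ (g j))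

theorem resolvent_tropical_identity_general (n : ℕ)
    (A : Fin (n + 1) → Fin (n + 1) → WithBot ℤ) :
    (∑ i, tdetSub A ({i}ᶜ) ({Fin.last n}ᶜ)
        = ∑ j ∈ Finset.univ.erase (Fin.last n),
            tdetFull (fun i k => if k = Fin.last n then A i j else A i k)) ∧
      (∑ i, tdetSub A ({i}ᶜ) ({Fin.last n}ᶜ)
        = ∑ j ∈ Finset.univ.erase (Fin.last n),
            Finset.univ.sup fun i =>
              tdetSub A ({i}ᶜ) ({Fin.last n}ᶜ) + A i j) := by
  have h := (isGreatest_sum_tdetSub A (Fin.last n)).unique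
    (isGreatest_sum_tdetFull_replaceCol A (Fin.last n))
  exact ⟨h, h.trans (sum_congr rfl fun j _ => tdetFull_replaceCol_eq_sup_tdetSub_add A _ j)⟩

/-- Jacobi's tropical identity for resolvent orders.  Let `A` be a square
matrix over `ℤ ∪ {−∞}` whose diagonal is a maximal transversal sum, let
`𝒪̄_{i,last}` be the tropical determinant of `A` with row `i` and the last
column deleted, and let `A_{[j]}` be `A` with its last column replaced by
column `j`.  Then `∑_i 𝒪̄_{i,last} = ∑_{j ≠ last} |A_{[j]}|_T`, and equivalently
`∑_i 𝒪̄_{i,last} = ∑_{j ≠ last} max_i (𝒪̄_{i,last} + a_{i,j})`. -/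
theorem resolvent_tropical_identity (n : ℕ)
    (A : Fin (n + 1) → Fin (n + 1) → WithBot ℤ)
    (hdiag : ∑ i, A i i = tdetFull A) :
    (∑ i, tdetSub A ({i}ᶜ) ({Fin.last n}ᶜ)
        = ∑ j ∈ Finset.univ.erase (Fin.last n),
            tdetFull (fun i k => if k = Fin.last n then A i j else A i k)) ∧
      (∑ i, tdetSub A ({i}ᶜ) ({Fin.last n}ᶜ)
        = ∑ j ∈ Finset.univ.erase (Fin.last n),
            Finset.univ.sup fun i =>
              tdetSub A ({i}ᶜ) ({Fin.last n}ᶜ) + A i j) :=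
  resolvent_tropical_identity_general n A
end
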